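/- For every real x with 0 ≤ x ≤ 1, the series ∑_{i=1}^{∞} ((1/2)_{i−1} / (2·i!)) · (1 − (1−x²)^i) converges and equals x. In particular (taking x = 1), ∑_{i=1}^{∞} (1/2)_{i−1}/(2·i!) = 1, equivalently ∑_{i=0}^{∞} (−1/2)_i / i! = 0. -/

import Mathlib

/-!
Write `c n = (-1/2)_n / n!`. Then `c n = (-1)^n * choose (1/2) n`, so Vandermonde's identity
`choose (1/2 + 1/2) n = choose 1 n` says that the Cauchy square of `∑ c n yⁿ` is `1 - y`.
For `n ≥ 1` the coefficients `c n` are negative, while the partial sums telescope to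
`∑_{n ≤ N} c n = (1/2)_N / N! > 0`; so `∑ c n` converges absolutely, and for `0 ≤ y ≤ 1` the
Cauchy product is legitimate, the sum is nonnegative, and it equals `√(1 - y)`, also at the
endpoint `y = 1` with no appeal to Abel's theorem. Taking `y = 1` gives `∑ c n = 0`, and
`y = 1 - x²` gives the series for `x`, whose coefficients are `-c (m + 1)`.
-/

/-- The Pochhammer symbol `(a)_n = a(a+1)⋯(a+n-1)` for a real number `a`. -/
noncomputable def poch (a : ℝ) (n : ℕ) : ℝ := ∏ i ∈ Finset.range n, (a + i)

open Finset Nat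

lemma poch_succ (a : ℝ) (n : ℕ) : poch a (n + 1) = poch a n * (a + n) :=
  prod_range_succ _ _

lemma poch_sub_one_succ (a : ℝ) (n : ℕ) : poch (a - 1) (n + 1) = (a - 1) * poch a n := by
  rw [poch, prod_range_succ', poch, mul_comm]
  push_cast
  simp only [sub_add_add_cancel, add_zero]

lemma poch_pos {a : ℝ} (ha : 0 < a) (n : ℕ) : 0 < poch a n :=
  prod_pos fun _ _ => by positivity

lemma poch_sub_one_succ_div_factorial (a : ℝ) (n : ℕ) :
    poch (a - 1) (n + 1) / (n + 1)! = poch a (n + 1) / (n + 1)! - poch a n / n ! := by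
  rw [poch_sub_one_succ, poch_succ, factorial_succ]
  push_cast
  field_simp
  ring

lemma sum_range_succ_poch_sub_one_div_factorial (a : ℝ) (N : ℕ) :
    ∑ n ∈ range (N + 1), poch (a - 1) n / n ! = poch a N / N ! := by
  induction N with
  | zero => simp [poch]
  | succ N ih => rw [sum_range_succ, ih, poch_sub_one_succ_div_factorial]; ring

lemma descPochhammer_smeval_eq_poch (a : ℝ) (n : ℕ) :
    (descPochhammer ℤ n).smeval a = (-1) ^ n * poch (-a) n := by
  induction n with
  | zero => simp [poch]
  | succ n ih =>
    rw [descPochhammer_succ_right, Polynomial.smeval_mul, ih, Polynomial.smeval_sub,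
      Polynomial.smeval_X, Polynomial.smeval_natCast, poch_succ]
    simp only [pow_one, nsmul_eq_mul]
    ring

lemma Ring.choose_eq_poch (a : ℝ) (n : ℕ) :
    Ring.choose a n = (-1) ^ n * poch (-a) n / n ! := by
  rw [Ring.choose_eq_smul, descPochhammer_smeval_eq_poch, smul_eq_mul]
  ring

noncomputable def sqrtCoeff (n : ℕ) : ℝ := poch (-(1 / 2)) n / n !

lemma sqrtCoeff_eq_choose (n : ℕ) : sqrtCoeff n = (-1) ^ n * Ring.choose (1 / 2 : ℝ) n := by
  rw [Ring.choose_eq_poch, sqrtCoeff, ← mul_div_assoc, ← mul_assoc, ← pow_add, ← two_mul,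
    pow_mul]
  norm_num

lemma sqrtCoeff_zero : sqrtCoeff 0 = 1 := by simp [sqrtCoeff, poch]

lemma neg_sqrtCoeff_succ (m : ℕ) :
    -sqrtCoeff (m + 1) = poch (1 / 2) m / (2 * (m + 1)! : ℝ) := by
  rw [sqrtCoeff, show (-(1 / 2) : ℝ) = 1 / 2 - 1 by norm_num, poch_sub_one_succ]
  ring

lemma sqrtCoeff_succ_nonpos (m : ℕ) : sqrtCoeff (m + 1) ≤ 0 := by
  have : 0 ≤ poch (1 / 2) m / (2 * (m + 1)! : ℝ) :=
    div_nonneg (poch_pos (by norm_num) m).le (by positivity)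
  linarith [neg_sqrtCoeff_succ m]

lemma sum_range_succ_sqrtCoeff (N : ℕ) :
    ∑ n ∈ range (N + 1), sqrtCoeff n = poch (1 / 2) N / N ! := by
  rw [← sum_range_succ_poch_sub_one_div_factorial]
  norm_num [sqrtCoeff]

lemma poch_half_div_factorial_pos (N : ℕ) : 0 < poch (1 / 2) N / N ! :=
  div_pos (poch_pos (by norm_num) N) (by positivity)

lemma summable_sqrtCoeff : Summable sqrtCoeff := by
  suffices Summable fun m => -sqrtCoeff (m + 1) from
    (summable_nat_add_iff 1).mp (by simpa using this.neg)
  refine summable_of_sum_range_le (c := 1) (fun m => neg_nonneg.mpr (sqrtCoeff_succ_nonpos m))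
    fun N => ?_
  have hpartial := sum_range_succ' sqrtCoeff N
  rw [sum_range_succ_sqrtCoeff, sqrtCoeff_zero] at hpartial
  rw [sum_neg_distrib]
  linarith [poch_half_div_factorial_pos N]

lemma tsum_sqrtCoeff_nonneg : 0 ≤ ∑' n, sqrtCoeff n := by
  refine ge_of_tendsto
    (summable_sqrtCoeff.hasSum.tendsto_sum_nat.comp (Filter.tendsto_add_atTop_nat 1))
    (Filter.Eventually.of_forall fun N => ?_)
  simp only [Function.comp_apply, sum_range_succ_sqrtCoeff]
  exact (poch_half_div_factorial_pos N).le

lemma sum_antidiagonal_sqrtCoeff_mul (n : ℕ) :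
    ∑ ij ∈ antidiagonal n, sqrtCoeff ij.1 * sqrtCoeff ij.2 =
      (-1) ^ n * (Nat.choose 1 n : ℝ) := by
  have hvandermonde := Ring.add_choose_eq (r := (1 / 2 : ℝ)) (s := 1 / 2) n (Commute.all _ _)
  rw [show (1 / 2 + 1 / 2 : ℝ) = (1 : ℕ) by norm_num, Ring.choose_natCast] at hvandermonde
  rw [hvandermonde, mul_sum]
  refine sum_congr rfl fun ij hij => ?_
  rw [sqrtCoeff_eq_choose, sqrtCoeff_eq_choose, ← mem_antidiagonal.mp hij, pow_add]
  ring

lemma summable_norm_sqrtCoeff_mul_pow {y : ℝ} (hy₀ : 0 ≤ y) (hy₁ : y ≤ 1) :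
    Summable fun n => ‖sqrtCoeff n * y ^ n‖ := by
  refine summable_sqrtCoeff.abs.of_nonneg_of_le (fun _ => norm_nonneg _) fun n => ?_
  rw [norm_mul, norm_pow, Real.norm_of_nonneg hy₀, Real.norm_eq_abs]
  exact mul_le_of_le_one_right (abs_nonneg _) (pow_le_one₀ hy₀ hy₁)

theorem hasSum_sqrtCoeff_mul_pow {y : ℝ} (hy₀ : 0 ≤ y) (hy₁ : y ≤ 1) :
    HasSum (fun n => sqrtCoeff n * y ^ n) (√(1 - y)) := by
  have hnorm := summable_norm_sqrtCoeff_mul_pow hy₀ hy₁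
  have hsq : (∑' n, sqrtCoeff n * y ^ n) ^ 2 = 1 - y := by
    rw [sq, tsum_mul_tsum_eq_tsum_sum_antidiagonal_of_summable_norm hnorm hnorm]
    have hcauchy (n : ℕ) :
        ∑ ij ∈ antidiagonal n, sqrtCoeff ij.1 * y ^ ij.1 * (sqrtCoeff ij.2 * y ^ ij.2) =
          (Nat.choose 1 n : ℝ) * (-y) ^ n := by
      rw [neg_pow, ← mul_assoc, mul_comm _ ((-1 : ℝ) ^ n), ← sum_antidiagonal_sqrtCoeff_mul,
        sum_mul]
      refine sum_congr rfl fun ij hij => ?_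
      rw [← mem_antidiagonal.mp hij, pow_add]
      ring
    rw [tsum_congr hcauchy, tsum_eq_sum (s := range 2) fun n hn => ?_]
    · simp [sum_range_succ, sub_eq_add_neg]
    · rw [Nat.choose_eq_zero_of_lt (by simpa using hn), Nat.cast_zero, zero_mul]
  have hnonneg : 0 ≤ ∑' n, sqrtCoeff n * y ^ n := by
    refine tsum_sqrtCoeff_nonneg.trans
      (summable_sqrtCoeff.tsum_le_tsum (fun n => ?_) hnorm.of_norm)
    rcases n with _ | m
    · simp
    · nlinarith [sqrtCoeff_succ_nonpos m, pow_le_one₀ (n := m + 1) hy₀ hy₁]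
  rw [← hsq, Real.sqrt_sq hnonneg]
  exact hnorm.of_norm.hasSum

/-- For every `x ∈ [0,1]`, `∑_{i=1}^{∞} ((1/2)_{i−1}/(2·i!))·(1 − (1−x²)^i) = x`
(the sum over `i ≥ 1` is indexed by `i = m+1`, `m ∈ ℕ`). In particular,
`∑_{i=1}^{∞} (1/2)_{i−1}/(2·i!) = 1`, equivalently `∑_{i=0}^{∞} (−1/2)_i/i! = 0`. -/
theorem sqrt_series_identity :
    (∀ x : ℝ, 0 ≤ x → x ≤ 1 →
      HasSum
        (fun m : ℕ => poch (1/2) m / (2 * (Nat.factorial (m + 1) : ℝ)) *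
          (1 - (1 - x ^ 2) ^ (m + 1)))
        x) ∧
    HasSum (fun m : ℕ => poch (1/2) m / (2 * (Nat.factorial (m + 1) : ℝ))) 1 ∧
    HasSum (fun i : ℕ => poch (-(1/2)) i / (Nat.factorial i : ℝ)) 0 := by
  have hzero : HasSum sqrtCoeff 0 := by
    simpa using hasSum_sqrtCoeff_mul_pow zero_le_one le_rfl
  have hone : HasSum (fun m : ℕ => poch (1 / 2) m / (2 * (m + 1)! : ℝ)) 1 := by
    simp_rw [← neg_sqrtCoeff_succ]
    simpa [sqrtCoeff_zero] using ((hasSum_nat_add_iff' 1).mpr hzero).neg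
  refine ⟨fun x hx₀ hx₁ => ?_, hone, hzero⟩
  have hy := hasSum_sqrtCoeff_mul_pow (y := 1 - x ^ 2) (by nlinarith) (by nlinarith)
  rw [sub_sub_cancel, Real.sqrt_sq hx₀] at hy
  have htail := (hasSum_nat_add_iff' 1).mpr hy
  convert hone.add htail using 1
  · ext m
    rw [← neg_sqrtCoeff_succ]
    ring
  · simp [sqrtCoeff_zero]
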